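/- For every integer r and every integer k ≥ 0, conjugating D_r by the plethystic multiplication operators P_{±z/M} yields (P_{−z/M} ∘ D_r ∘ P_{z/M})|_{z^k} = D_{k+r}; equivalently, P_{−z/M} ∘ D_r ∘ P_{z/M} = Σ_{k≥0} z^k D_{k+r} as formal power series in z with operator coefficients. -/

import Mathlib

/-!
Common setup for "A proof of the Theta Operator Conjecture" (Romero).

* `K = ℚ(q,t)` is realized as the fraction field of `ℚ[q,t]`.
* `Λ`, the ring of symmetric functions with coefficients in `ℚ(q,t)`, is realized as the
  polynomial ring on the power sums `p 1, p 2, …` (a presentation valid in characteristic 0).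
* The plethystic exponential `E[X] = ∑ hₙ[X] = exp (∑ p_k/k)` is encoded through the
  Newton-type recursion `n·Gₙ = ∑_{k=1}^{n} c_k G_{n-k}` for the coefficients of
  `exp (∑_{k ≥ 1} c_k z^k / k)`.
* Formal series in an auxiliary variable `z` (resp. a Laurent variable) with coefficients
  in `Λ` are elements of `PowerSeries Λ` (resp. `LaurentSeries Λ`), and operator identities
  involving generating functions are stated coefficientwise / as series identities,
  pointwise on `F : Λ`.
* The modified Macdonald basis `H̃_μ` (indexed by `YoungDiagram`) is axiomatized in the
  structure `MacdonaldBasis` via the Garsia–Haiman triangularity/normalization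
  characterization; all Macdonald eigenoperators (`Δ_f`, `∇`, `Π`, `Θ_k`, `Δ_v`) are then
  defined diagonally from it.
-/

noncomputable section

namespace ThetaOperators

open scoped Classical

/-- The base field `ℚ(q,t)`. -/
abbrev K : Type := FractionRing (MvPolynomial (Fin 2) ℚ)

/-- The parameter `q`. -/
def q : K := algebraMap (MvPolynomial (Fin 2) ℚ) K (MvPolynomial.X 0)

/-- The parameter `t`. -/
def t : K := algebraMap (MvPolynomial (Fin 2) ℚ) K (MvPolynomial.X 1)

/-- `M = (1-q)(1-t)`. -/
def M : K := (1 - q) * (1 - t)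

/-- The ring of symmetric functions with coefficients in `ℚ(q,t)`, presented as the
polynomial ring on the power sums. -/
abbrev Λ : Type := MvPolynomial ℕ+ K

/-- The power sum symmetric function `p_k`. -/
def p (k : ℕ+) : Λ := MvPolynomial.X k

/-- `genF c n` is the coefficient of `z^n` in `exp (∑_{k ≥ 1} c_k z^k / k)`,
via the Newton-type recursion `n·Gₙ = ∑_{k=1}^{n} c_k G_{n-k}`. -/
def genF (c : ℕ+ → Λ) : ℕ → Λ
  | 0 => 1
  | n + 1 =>
      (((n : K) + 1)⁻¹) •
        ∑ k ∈ Finset.range (n + 1), c ⟨k + 1, Nat.succ_pos k⟩ * genF c (n - k)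
  termination_by n => n
  decreasing_by simp_wf <;> omega

/-- The complete homogeneous symmetric function `h_n`: coefficient of `z^n`
in `E[zX] = exp (∑ p_k z^k / k)`. -/
def h (n : ℕ) : Λ := genF p n

/-- The elementary symmetric function `e_n`: `E[-zX] = ∑ (-z)^n e_n`. -/
def e (n : ℕ) : Λ := (-1) ^ n * genF (fun k => -p k) n

/-- Scalar version of `genF`: coefficient of `z^n` in `exp (∑_{k≥1} c_k z^k / k)` over `K`. -/
def genK (c : ℕ+ → K) : ℕ → K
  | 0 => 1
  | n + 1 =>
      ((n : K) + 1)⁻¹ *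
        ∑ k ∈ Finset.range (n + 1), c ⟨k + 1, Nat.succ_pos k⟩ * genK c (n - k)
  termination_by n => n
  decreasing_by simp_wf <;> omega

/-- `Eser ζ n` is the coefficient of `z^n` in `E[zWX]`, where `W` is the alphabet with
power sums `p_k[W] = ζ k`.  E.g. `Eser (fun _ => -1) n = (-1)^n eₙ[X]`, so that
`∑ z^n · Eser (fun _ => -1) n = E[-zX]`. -/
def Eser (ζ : ℕ+ → K) (n : ℕ) : Λ := genF (fun k => MvPolynomial.C (ζ k) * p k) n

/-- `p_k[M] = (1-q^k)(1-t^k)`. -/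
def Mk (k : ℕ+) : K := (1 - q ^ (k : ℕ)) * (1 - t ^ (k : ℕ))

/-- `p_k[X/M]`-twist: `1/((1-q^k)(1-t^k))`.  Thus `Eser invM n = h_n[X/M]` and
`∑ z^n Eser invM n = E[zX/M]`; similarly `∑ z^n Eser (fun j => -invM j) n = E[-zX/M]`. -/
def invM (k : ℕ+) : K := (Mk k)⁻¹

/-- Plethystic translation `T_Y : F[X] ↦ F[X+Y]` by an alphabet `Y` with power sums
`p_k[Y] = a k ∈ K`. -/
def Ttr (a : ℕ+ → K) : Λ →ₐ[K] Λ :=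
  MvPolynomial.aeval fun k => p k + MvPolynomial.C (a k)

/-- `f ↦ f* = f[X/M]`. -/
def star : Λ →ₐ[K] Λ :=
  MvPolynomial.aeval fun k => MvPolynomial.C (invM k) * p k

/-- `F ↦ F[X + M/z]`, as a Laurent series in `z` with coefficients in `Λ`
(the translation `T_{M/z}`). -/
def TMz : Λ →ₐ[K] LaurentSeries Λ :=
  MvPolynomial.aeval fun k =>
    HahnSeries.C (p k) + Mk k • HahnSeries.single (-((k : ℕ) : ℤ)) (1 : Λ)

/-- `E[-zX]` as a Laurent series in `z`. -/
def EnegL : LaurentSeries Λ :=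
  HahnSeries.ofPowerSeries ℤ Λ (PowerSeries.mk (Eser fun _ => -1))

/-- The Garsia–Haiman–Tesler operator `D_k`:
`D_k F = (F[X + M/z] · E[-zX]) |_{z^k}`. -/
def D (k : ℤ) (F : Λ) : Λ := ((TMz F) * EnegL).coeff k

/-- `p_k[B_μ] = ∑_{(i,j) ∈ μ} q^{k i'} t^{k j'}` where the cell `c` of the Young diagram
has (0-based) column index `c.2` (the `q`-exponent) and row index `c.1` (the `t`-exponent). -/
def Bexp (μ : YoungDiagram) (k : ℕ+) : K :=
  ∑ c ∈ μ.cells, q ^ ((k : ℕ) * c.2) * t ^ ((k : ℕ) * c.1)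

/-- `n(μ) = ∑ᵢ (i-1) μᵢ`: the sum of the (0-based) row indices of the cells. -/
def nstat (μ : YoungDiagram) : ℕ := ∑ c ∈ μ.cells, c.1

/-- `n(μ') = ∑ᵢ (i-1) μᵢ'`: the sum of the (0-based) column indices of the cells. -/
def nstat' (μ : YoungDiagram) : ℕ := ∑ c ∈ μ.cells, c.2

/-- `h_n` for integer index (zero for negative `n`). -/
def hZ (n : ℤ) : Λ := if n < 0 then 0 else h n.toNat

/-- The Schur function, via the Jacobi–Trudi determinant. -/
def schur (μ : YoungDiagram) : Λ :=
  Matrix.det (Matrix.of fun i j : Fin (μ.colLen 0) =>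
    hZ ((μ.rowLen i : ℤ) + (j : ℤ) - (i : ℤ)))

/-- Dominance order: `lam ⊵ μ`. -/
def Dominates (lam μ : YoungDiagram) : Prop :=
  lam.card = μ.card ∧
    ∀ m : ℕ, ∑ i ∈ Finset.range m, μ.rowLen i ≤ ∑ i ∈ Finset.range m, lam.rowLen i

/-- The span of the Schur functions `s_lam` with `lam ⊵ μ`. -/
def domSpan (μ : YoungDiagram) : Submodule K Λ :=
  Submodule.span K {f | ∃ lam, Dominates lam μ ∧ f = schur lam}

/-- Plethystic twist `F[X] ↦ F[AX]` for an alphabet `A` with `p_k[A] = a k`. -/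
def twist (a : ℕ+ → K) : Λ →ₐ[K] Λ :=
  MvPolynomial.aeval fun k => MvPolynomial.C (a k) * p k

/-- Evaluation at the single-letter alphabet `X = 1` (i.e. `p_k ↦ 1`); for homogeneous `F`
of degree `n` this is the Hall scalar product `⟨F, s_(n)⟩`. -/
def ev1 : Λ →ₐ[K] K := MvPolynomial.aeval fun _ => 1

/-- The modified Macdonald basis `H̃_μ` of `Λ`, axiomatized by the Garsia–Haiman
characterization: `H̃_μ[X(q-1)] ∈ span{s_lam : lam ⊵ μ}`,
`H̃_μ[X(t-1)] ∈ span{s_lam : lam ⊵ μ'}`, and `⟨H̃_μ, s_(n)⟩ = 1`. -/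
structure MacdonaldBasis where
  H : Module.Basis YoungDiagram K Λ
  triangular_q : ∀ μ, twist (fun k => q ^ (k : ℕ) - 1) (H μ) ∈ domSpan μ
  triangular_t : ∀ μ, twist (fun k => t ^ (k : ℕ) - 1) (H μ) ∈ domSpan μ.transpose
  normalized : ∀ μ, ev1 (H μ) = 1

/-- The diagonal operator on `Λ` acting on the Macdonald basis with eigenvalues `ev`. -/
def diag (B : MacdonaldBasis) (ev : YoungDiagram → K) (F : Λ) : Λ :=
  (B.H.repr F).sum fun μ c => (ev μ * c) • B.H μ

/-- The Delta eigenoperator `Δ_f : H̃_μ ↦ f[B_μ] H̃_μ`. -/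
def Delta (B : MacdonaldBasis) (f : Λ) : Λ → Λ :=
  diag B fun μ => MvPolynomial.aeval (Bexp μ) f

/-- `∇ : H̃_μ ↦ (-1)^{|μ|} q^{n(μ')} t^{n(μ)} H̃_μ`. -/
def nabla (B : MacdonaldBasis) : Λ → Λ :=
  diag B fun μ => (-1) ^ μ.card * q ^ nstat' μ * t ^ nstat μ

/-- The inverse of `∇`. -/
def nablaInv (B : MacdonaldBasis) : Λ → Λ :=
  diag B fun μ => ((-1) ^ μ.card * q ^ nstat' μ * t ^ nstat μ)⁻¹

/-- `Π_μ = ∏_{(i,j) ∈ μ/(1)} (1 - q^i t^j)` (product over all cells but the corner). -/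
def PiEv (μ : YoungDiagram) : K :=
  ∏ c ∈ μ.cells.erase (0, 0), (1 - q ^ c.2 * t ^ c.1)

/-- The operator `Π : H̃_μ ↦ Π_μ H̃_μ`. -/
def PiOp (B : MacdonaldBasis) : Λ → Λ := diag B PiEv

/-- The inverse of `Π`. -/
def PiInv (B : MacdonaldBasis) : Λ → Λ := diag B fun μ => (PiEv μ)⁻¹

/-- The Theta operator `Θ_k = Π ∘ (multiplication by e_k[X/M]) ∘ Π⁻¹`. -/
def Theta (B : MacdonaldBasis) (k : ℕ) (F : Λ) : Λ :=
  PiOp B (star (e k) * PiInv B F)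

/-- `Δ_v = ∑_{n ≥ 0} (-v)^n Δ_{e_n}`, the diagonal operator with eigenvalues
`∏_{(i,j) ∈ μ} (1 - v q^i t^j)`. -/
def DeltaV (B : MacdonaldBasis) (v : K) : Λ → Λ :=
  diag B fun μ => ∏ c ∈ μ.cells, (1 - v * q ^ c.2 * t ^ c.1)

/-- The inverse of `Δ_v`. -/
def DeltaVInv (B : MacdonaldBasis) (v : K) : Λ → Λ :=
  diag B fun μ => (∏ c ∈ μ.cells, (1 - v * q ^ c.2 * t ^ c.1))⁻¹

/-- `v ∈ ℚ(q,t)` is a monomial `q^a t^b`. -/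
def IsMonomial (v : K) : Prop := ∃ a b : ℤ, v = q ^ a * t ^ b

/-- `∏_{(i,j) ∈ μ} (1 - q^i t^j u)` as a polynomial in `u`. -/
def cellPoly (μ : YoungDiagram) : Polynomial K :=
  ∏ c ∈ μ.cells, (1 - Polynomial.C (q ^ c.2 * t ^ c.1) * Polynomial.X)

/-!
Write `E[zX/M] = ∑ zⁿ h_n[X/M]`. Translating the alphabet by `M/w` splits the plethystic
exponential: `E[z(X + M/w)/M] = E[zX/M] · E[z/w] = E[zX/M] · ∑ⱼ zʲ w⁻ʲ`. Extracting the
coefficient of `w^r` in `(E[zX/M] F)[X + M/w] · E[-wX]` therefore gives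
`D_r (E[zX/M] F) = E[zX/M] · ∑ⱼ zʲ D_{r+j} F`, and `E[-zX/M] · E[zX/M] = 1` finishes the proof.

Both identities between exponentials are proved without logarithms: over a torsion-free ring,
`G = exp (∑ c_k z^k / k)` is the unique series with `G(0) = 1` and `G' = (∑ c_k z^{k-1}) G`,
and this differential equation is preserved by ring maps and turns products into sums.
-/

open PowerSeries Finset.HasAntidiagonal

instance _root_.HahnSeries.instIsAddTorsionFree {Γ R : Type*} [PartialOrder Γ] [AddMonoid R]
    [IsAddTorsionFree R] : IsAddTorsionFree (HahnSeries Γ R) where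
  nsmul_right_injective _ hn _ _ h := HahnSeries.ext <| nsmul_right_injective hn <| by
    simpa only [HahnSeries.coeff_nsmul] using congrArg HahnSeries.coeff h

theorem _root_.PowerSeries.derivative_map {A B : Type*} [CommSemiring A] [CommSemiring B]
    (φ : A →+* B) (f : A⟦X⟧) : d⁄dX B (map φ f) = map φ (d⁄dX A f) := by
  ext n
  simp [coeff_derivative]

section ExpPowerSum

variable {A B : Type*} [CommSemiring A] [CommSemiring B]

def powerSumDeriv (c : ℕ+ → A) : A⟦X⟧ := PowerSeries.mk fun n => c n.succPNat

def IsExpPowerSum (c : ℕ+ → A) (G : A⟦X⟧) : Prop :=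
  constantCoeff G = 1 ∧ d⁄dX A G = powerSumDeriv c * G

theorem IsExpPowerSum.eq [IsAddTorsionFree A] {c : ℕ+ → A} {G H : A⟦X⟧}
    (hG : IsExpPowerSum c G) (hH : IsExpPowerSum c H) : G = H := by
  ext n
  induction n using Nat.strong_induction_on with
  | _ n ih =>
  cases n with
  | zero => simp only [coeff_zero_eq_constantCoeff_apply, hG.1, hH.1]
  | succ n =>
    have hscaled : coeff (n + 1) G * (n + 1 : ℕ) = coeff (n + 1) H * (n + 1 : ℕ) := by
      rw [Nat.cast_succ, ← coeff_derivative, ← coeff_derivative, hG.2, hH.2, coeff_mul, coeff_mul]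
      exact Finset.sum_congr rfl fun ij hij => by
        rw [ih ij.2 (Finset.Nat.antidiagonal.snd_lt hij)]
    simp only [← nsmul_eq_mul'] at hscaled
    exact nsmul_right_injective n.succ_ne_zero hscaled

theorem IsExpPowerSum.map {c : ℕ+ → A} {G : A⟦X⟧} (hG : IsExpPowerSum c G) (φ : A →+* B) :
    IsExpPowerSum (φ ∘ c) (map φ G) := by
  refine ⟨?_, ?_⟩
  · rw [← coeff_zero_eq_constantCoeff_apply, coeff_map, coeff_zero_eq_constantCoeff_apply, hG.1,
      map_one]
  · rw [derivative_map, hG.2, map_mul]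
    rfl

theorem IsExpPowerSum.mul {c d : ℕ+ → A} {G H : A⟦X⟧} (hG : IsExpPowerSum c G)
    (hH : IsExpPowerSum d H) : IsExpPowerSum (c + d) (G * H) := by
  refine ⟨by rw [map_mul, hG.1, hH.1, one_mul], ?_⟩
  have hsum : powerSumDeriv (c + d) = powerSumDeriv c + powerSumDeriv d := by
    ext n
    simp [powerSumDeriv]
  rw [Derivation.leibniz, hG.2, hH.2, hsum, smul_eq_mul, smul_eq_mul]
  ring

theorem isExpPowerSum_zero : IsExpPowerSum (0 : ℕ+ → A) 1 := by
  refine ⟨map_one _, ?_⟩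
  rw [derivative_one, mul_one]
  ext n
  simp [powerSumDeriv]

theorem isExpPowerSum_geometric (w : A) :
    IsExpPowerSum (fun k => w ^ (k : ℕ)) (PowerSeries.mk (w ^ ·)) := by
  refine ⟨by simp, ?_⟩
  ext n
  rw [coeff_derivative, coeff_mul, coeff_mk]
  have hterm : ∀ ij ∈ antidiagonal n,
      coeff ij.1 (powerSumDeriv fun k : ℕ+ => w ^ (k : ℕ)) * coeff ij.2 (PowerSeries.mk (w ^ ·))
        = w ^ (n + 1) := by
    intro ij hij
    rw [mem_antidiagonal] at hij
    simp only [powerSumDeriv, coeff_mk, Nat.succPNat_coe, ← pow_add]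
    congr 1
    omega
  rw [Finset.sum_congr rfl hterm, Finset.sum_const, Finset.Nat.card_antidiagonal, nsmul_eq_mul',
    Nat.cast_succ]

end ExpPowerSum

theorem isExpPowerSum_genF (c : ℕ+ → Λ) : IsExpPowerSum c (PowerSeries.mk (genF c)) := by
  refine ⟨by rw [← coeff_zero_eq_constantCoeff_apply, coeff_mk, genF], ?_⟩
  ext1 n
  rw [coeff_derivative, coeff_mk, coeff_mul, Finset.Nat.sum_antidiagonal_eq_sum_range_succ_mk,
    genF, smul_mul_assoc, show ((n : Λ) + 1) = algebraMap K Λ ((n : K) + 1) by simp,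
    ← Algebra.commutes, ← Algebra.smul_def, smul_smul,
    inv_mul_cancel₀ (Nat.cast_add_one_ne_zero n), one_smul]
  simp only [powerSumDeriv, coeff_mk]
  rfl

theorem isExpPowerSum_Eser (ζ : ℕ+ → K) :
    IsExpPowerSum (fun k => MvPolynomial.C (ζ k) * p k) (PowerSeries.mk (Eser ζ)) :=
  isExpPowerSum_genF _

theorem mk_Eser_neg_invM_mul_mk_Eser_invM :
    (PowerSeries.mk fun n => Eser (fun j => -invM j) n) * PowerSeries.mk (Eser invM) = 1 := by
  refine ((isExpPowerSum_Eser _).mul (isExpPowerSum_Eser _)).eq ?_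
  convert isExpPowerSum_zero using 1
  ext1 k
  rw [Pi.add_apply, ← add_mul, ← MvPolynomial.C_add, neg_add_cancel, MvPolynomial.C_0, zero_mul,
    Pi.zero_apply]

theorem one_sub_algebraMap_X_pow_ne_zero (i : Fin 2) (k : ℕ+) :
    (1 : K) - algebraMap (MvPolynomial (Fin 2) ℚ) K (MvPolynomial.X i) ^ (k : ℕ) ≠ 0 := by
  rw [sub_ne_zero, ne_comm, ← map_pow, ← map_one (algebraMap (MvPolynomial (Fin 2) ℚ) K),
    (IsFractionRing.injective _ K).ne_iff]
  intro h
  simpa [zero_pow k.ne_zero] using congrArg MvPolynomial.constantCoeff h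

theorem Mk_ne_zero (k : ℕ+) : Mk k ≠ 0 :=
  mul_ne_zero (one_sub_algebraMap_X_pow_ne_zero 0 k) (one_sub_algebraMap_X_pow_ne_zero 1 k)

theorem TMz_C_invM_mul_p (k : ℕ+) :
    TMz (MvPolynomial.C (invM k) * p k)
      = HahnSeries.C (MvPolynomial.C (invM k) * p k)
          + HahnSeries.single (-1 : ℤ) (1 : Λ) ^ (k : ℕ) := by
  have hC : TMz (MvPolynomial.C (invM k)) = HahnSeries.C (MvPolynomial.C (invM k)) := by
    rw [TMz, MvPolynomial.aeval_C, HahnSeries.algebraMap_apply', PowerSeries.algebraMap_apply,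
      HahnSeries.ofPowerSeries_C]
    rfl
  have hsingle : Mk k • HahnSeries.single (-((k : ℕ) : ℤ)) (1 : Λ)
      = HahnSeries.single (-((k : ℕ) : ℤ)) (MvPolynomial.C (Mk k)) := by
    ext n
    rw [HahnSeries.coeff_smul, HahnSeries.coeff_single, HahnSeries.coeff_single]
    split_ifs <;> simp [MvPolynomial.smul_eq_C_mul]
  rw [map_mul, hC, TMz, p, MvPolynomial.aeval_X, hsingle, mul_add, ← map_mul]
  simp only [HahnSeries.C_apply]
  rw [HahnSeries.single_mul_single, zero_add, ← MvPolynomial.C_mul, invM,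
    inv_mul_cancel₀ (Mk_ne_zero k), MvPolynomial.C_1, HahnSeries.single_pow, one_pow, nsmul_eq_mul,
    mul_neg_one]
  rfl

theorem map_TMz_mk_Eser_invM :
    map (TMz : Λ →+* LaurentSeries Λ) (PowerSeries.mk (Eser invM))
      = map (HahnSeries.C : Λ →+* LaurentSeries Λ) (PowerSeries.mk (Eser invM))
          * PowerSeries.mk (HahnSeries.single (-1 : ℤ) (1 : Λ) ^ ·) := by
  refine ((isExpPowerSum_Eser _).map (B := LaurentSeries Λ) TMz).eq ?_
  convert ((isExpPowerSum_Eser _).map (B := LaurentSeries Λ) HahnSeries.C).mul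
    (isExpPowerSum_geometric (HahnSeries.single (-1 : ℤ) (1 : Λ))) using 1
  funext k
  exact TMz_C_invM_mul_p k

theorem TMz_Eser_invM (n : ℕ) :
    TMz (Eser invM n)
      = ∑ ij ∈ antidiagonal n, HahnSeries.single (-(ij.2 : ℤ)) (Eser invM ij.1) := by
  have h := congrArg (coeff n) map_TMz_mk_Eser_invM
  rw [coeff_map, coeff_mk, coeff_mul] at h
  refine h.trans (Finset.sum_congr rfl fun ij _ => ?_)
  rw [coeff_map, coeff_mk, coeff_mk, HahnSeries.C_apply, HahnSeries.single_pow,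
    HahnSeries.single_mul_single, one_pow, mul_one, zero_add, nsmul_eq_mul, mul_neg_one]

theorem mk_D_Eser_invM_mul (r : ℤ) (F : Λ) :
    (PowerSeries.mk fun n => D r (Eser invM n * F))
      = PowerSeries.mk (Eser invM) * PowerSeries.mk fun j => D (r + j) F := by
  ext1 n
  rw [coeff_mul, coeff_mk, D, map_mul, TMz_Eser_invM, Finset.sum_mul, Finset.sum_mul,
    HahnSeries.coeff_sum]
  refine Finset.sum_congr rfl fun ij _ => ?_
  rw [coeff_mk, coeff_mk, D, mul_assoc, ← HahnSeries.coeff_single_mul_add, add_neg_cancel_right]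

/-- `P_{-z/M} ∘ D_r ∘ P_{z/M} = ∑_{k ≥ 0} z^k D_{k+r}`. -/
theorem D_conjugation (r : ℤ) (F : Λ) :
    (PowerSeries.mk fun n => Eser (fun j => -invM j) n)
        * (PowerSeries.mk fun n => D r (Eser invM n * F))
      = PowerSeries.mk fun k => D ((k : ℤ) + r) F := by
  rw [mk_D_Eser_invM_mul, ← mul_assoc, mk_Eser_neg_invM_mul_mk_Eser_invM, one_mul]
  ext1 k
  rw [coeff_mk, coeff_mk, add_comm]

end ThetaOperators
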